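/- Let (W,G) = ℝ^{d+2,2} with Z₀ the special null element of o(d+2,2) whose block form (with respect to the splitting ℝ^{d+2} ⊕ ℝ²) is Z₀ = [[0,0,ξ],[−ξ*,0,0],[0,0,0]] where ξ ∈ ℝ^{d+2} is g-null and ξ* = g(ξ,·). Then the Lie algebra of endomorphisms Z ∈ o(d+2,2) commuting with Z₀ consists exactly of matrices of the block form Z = [[Λ, αξ, Γ],[−Γ*, χ, 0],[−αξ*, 0, −χ]] with Λ ∈ so(d+1,1), Γ ∈ ℝ^{d+2}, α, χ ∈ ℝ, and Λξ + χξ = 0. -/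
import Mathlib


/-- Extended (Bargmann) space `ℝ^{d+2}` with coordinates `(x¹,…,x^d,t,s)`. -/
abbrev BSpace (d : ℕ) := Fin (d+2) → ℝ

/-- Index of the time coordinate `t = x^{d+1}`. -/
def tIdx (d : ℕ) : Fin (d+2) := ⟨d, by omega⟩

/-- Index of the vertical coordinate `s = x^{d+2}`. -/
def sIdx (d : ℕ) : Fin (d+2) := ⟨d+1, by omega⟩

/-- Flat Bargmann metric `g = Σᵢ (dxⁱ)² + 2dt⊙ds` on `ℝ^{d+2}`. -/
def gB (d : ℕ) (x y : BSpace d) : ℝ :=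
  (∑ i : Fin d, x (Fin.castAdd 2 i) * y (Fin.castAdd 2 i))
    + x (tIdx d) * y (sIdx d) + x (sIdx d) * y (tIdx d)

/-- The null vector `ξ = ∂/∂s`. -/
noncomputable def ξB (d : ℕ) : BSpace d := Pi.single (sIdx d) 1

/-- Ambient space `ℝ^{d+2,2} = ℝ^{d+2} ⊕ ℝ²`. -/
abbrev ASpace (d : ℕ) := BSpace d × ℝ × ℝ

/-- Ambient metric `G` with Gram matrix `[[g,0,0],[0,0,1],[0,1,0]]`. -/
def GA (d : ℕ) (u v : ASpace d) : ℝ :=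
  gB d u.1 v.1 + u.2.1 * v.2.2 + u.2.2 * v.2.1

/-- The special null element `Z₀ = [[0,0,ξ],[−ξ*,0,0],[0,0,0]]` of `o(d+2,2)`:
`Z₀(x,a,b) = (bξ, −θ(x), 0)` with `θ = g(ξ,·)`. -/
noncomputable def Z0 (d : ℕ) (u : ASpace d) : ASpace d :=
  (u.2.2 • ξB d, -gB d (ξB d) u.1, 0)


lemma gB_symm (d : ℕ) (x y : BSpace d) : gB d x y = gB d y x := by
  unfold gB
  rw [Finset.sum_congr rfl fun i _ => mul_comm _ _]
  ring

lemma gB_add_left (d : ℕ) (x y z : BSpace d) :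
    gB d (x + y) z = gB d x z + gB d y z := by
  simp [gB, add_mul, Finset.sum_add_distrib]; ring

lemma gB_add_right (d : ℕ) (x y z : BSpace d) :
    gB d x (y + z) = gB d x y + gB d x z := by
  simp [gB, mul_add, Finset.sum_add_distrib]; ring

lemma gB_smul_left (d : ℕ) (c : ℝ) (x z : BSpace d) :
    gB d (c • x) z = c * gB d x z := by
  simp [gB, smul_eq_mul, Finset.mul_sum, mul_add, mul_assoc]

lemma gB_smul_right (d : ℕ) (c : ℝ) (x z : BSpace d) :
    gB d x (c • z) = c * gB d x z := by
  rw [gB_symm, gB_smul_left, gB_symm]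

lemma gB_zero_left (d : ℕ) (z : BSpace d) : gB d 0 z = 0 := by
  simp [gB]

lemma gB_zero_right (d : ℕ) (z : BSpace d) : gB d z 0 = 0 := by
  simp [gB]

lemma castAdd_ne_sIdx (d : ℕ) (i : Fin d) : (Fin.castAdd 2 i : Fin (d+2)) ≠ sIdx d := by
  simp only [Fin.ne_iff_vne, Fin.coe_castAdd, sIdx]
  omega

lemma tIdx_ne_sIdx (d : ℕ) : tIdx d ≠ sIdx d := by
  simp [tIdx, sIdx, Fin.ext_iff]

lemma xiB_t (d : ℕ) : ξB d (tIdx d) = 0 := by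
  simp [ξB, Pi.single_eq_of_ne (tIdx_ne_sIdx d)]

lemma xiB_s (d : ℕ) : ξB d (sIdx d) = 1 := by
  simp [ξB]

lemma gB_xi_left (d : ℕ) (x : BSpace d) : gB d (ξB d) x = x (tIdx d) := by
  unfold gB
  rw [Finset.sum_eq_zero fun i _ => by
    rw [show ξB d (Fin.castAdd 2 i) = 0 from by
      simp [ξB, Pi.single_eq_of_ne (castAdd_ne_sIdx d i)], zero_mul]]
  rw [xiB_t, xiB_s]; ring

lemma gB_xi_xi (d : ℕ) : gB d (ξB d) (ξB d) = 0 := by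
  rw [gB_xi_left, xiB_t]

lemma gB_xi_et (d : ℕ) : gB d (ξB d) (Pi.single (tIdx d) 1) = 1 := by
  rw [gB_xi_left]; simp

lemma aspace_ext {d : ℕ} {u v : ASpace d} (h1 : u.1 = v.1) (h2 : u.2.1 = v.2.1)
    (h3 : u.2.2 = v.2.2) : u = v := by
  obtain ⟨x, a, b⟩ := u
  obtain ⟨y, c, e⟩ := v
  simp_all

/-- the centralizer of the special null element `Z₀` in
`o(d+2,2)` (the Schrödinger Lie algebra) consists exactly of the maps of
block form `[[Λ, αξ, Γ],[−Γ*, χ, 0],[−αξ*, 0, −χ]]` with `Λ ∈ so(d+1,1)`,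
`Γ ∈ ℝ^{d+2}`, `α, χ ∈ ℝ` and `Λξ + χξ = 0`. -/
theorem centralizer_of_Z0_block_form (d : ℕ) (Z : ASpace d → ASpace d) :
    (IsLinearMap ℝ Z
      ∧ (∀ u v : ASpace d, GA d (Z u) v + GA d u (Z v) = 0)
      ∧ (∀ w : ASpace d, Z (Z0 d w) = Z0 d (Z w)))
    ↔ ∃ (Λ : BSpace d →ₗ[ℝ] BSpace d) (Γ : BSpace d) (α χ : ℝ),
        (∀ u v : BSpace d, gB d (Λ u) v + gB d u (Λ v) = 0) ∧
        Λ (ξB d) + χ • ξB d = 0 ∧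
        ∀ (x : BSpace d) (a b : ℝ),
          Z (x, a, b) =
            (Λ x + (α * a) • ξB d + b • Γ,
             -gB d Γ x + χ * a,
             -(α * gB d (ξB d) x) - χ * b) := by
  constructor
  · rintro ⟨hlin, hskew, hcomm⟩
    have hdec : ∀ (x : BSpace d) (a b : ℝ),
        Z (x, a, b) = Z (x,0,0) + a • Z (0,1,0) + b • Z (0,0,1) := by
      intro x a b
      have h : ((x,a,b) : ASpace d)
          = (x,0,0) + a • (((0:BSpace d),(1:ℝ),(0:ℝ)) : ASpace d)
            + b • (((0:BSpace d),(0:ℝ),(1:ℝ)) : ASpace d) := by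
        simp [Prod.ext_iff]
      rw [h, hlin.map_add, hlin.map_add, hlin.map_smul, hlin.map_smul]
    -- skewness instances
    have skewAA : ∀ x y : BSpace d,
        gB d (Z (x,0,0)).1 y + gB d x (Z (y,0,0)).1 = 0 := by
      intro x y
      have := hskew (x,0,0) (y,0,0)
      simpa [GA] using this
    have skewPB : ∀ y : BSpace d,
        gB d (Z ((0:BSpace d),1,0)).1 y + (Z (y,0,0)).2.2 = 0 := by
      intro y
      have := hskew (0,1,0) (y,0,0)
      simpa [GA, gB_zero_left] using this
    have skewQB : ∀ y : BSpace d,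
        gB d (Z ((0:BSpace d),0,1)).1 y + (Z (y,0,0)).2.1 = 0 := by
      intro y
      have := hskew (0,0,1) (y,0,0)
      simpa [GA, gB_zero_left] using this
    have skewQQ : (Z ((0:BSpace d),0,1)).2.1 = 0 := by
      have := hskew (0,0,1) (0,0,1)
      simp [GA, gB_zero_left, gB_zero_right] at this
      linarith
    have skewPQ : (Z ((0:BSpace d),1,0)).2.1 + (Z ((0:BSpace d),0,1)).2.2 = 0 := by
      have := hskew (0,1,0) (0,0,1)
      simpa [GA, gB_zero_left, gB_zero_right] using this
    -- commutation instances
    have comm1 : Z (ξB d, 0, 0)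
        = ((Z ((0:BSpace d),0,1)).2.2 • ξB d,
           -gB d (ξB d) (Z ((0:BSpace d),0,1)).1, 0) := by
      have := hcomm (0,0,1)
      simpa [Z0, gB_zero_right] using this
    have comm2 : -Z ((0:BSpace d),1,0)
        = ((Z (Pi.single (tIdx d) 1, 0, 0)).2.2 • ξB d,
           -gB d (ξB d) (Z (Pi.single (tIdx d) 1, 0, 0)).1, 0) := by
      have h := hcomm (Pi.single (tIdx d) 1, 0, 0)
      have h1 : Z0 d (Pi.single (tIdx d) 1, 0, 0) = ((0:BSpace d), -1, 0) := by
        simp [Z0, gB_xi_et]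
      rw [h1] at h
      have h2 : (((0:BSpace d), (-1:ℝ), (0:ℝ)) : ASpace d)
          = (-1 : ℝ) • (((0:BSpace d),(1:ℝ),(0:ℝ)) : ASpace d) := by
        simp [Prod.ext_iff]
      rw [h2, hlin.map_smul, neg_one_smul] at h
      simpa [Z0] using h
    set α : ℝ := -(Z (Pi.single (tIdx d) 1, 0, 0)).2.2 with hα
    set χ : ℝ := (Z ((0:BSpace d),1,0)).2.1 with hχ
    have hp : (Z ((0:BSpace d),1,0)).1 = α • ξB d := by
      have := congrArg Prod.fst comm2
      simp only [Prod.fst_neg] at this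
      rw [hα, neg_smul]
      rw [← this, neg_neg]
    have hc3 : (Z ((0:BSpace d),1,0)).2.2 = 0 := by
      have := congrArg (fun u : ASpace d => u.2.2) comm2
      simp at this
      exact this
    have hc4 : (Z ((0:BSpace d),0,1)).2.2 = -χ := by
      rw [hχ]; linarith
    have hAxi : (Z (ξB d, 0, 0)).1 = (-χ) • ξB d := by
      have := congrArg Prod.fst comm1
      rw [this, hc4]
    have hf : ∀ y : BSpace d,
        (Z (y,0,0)).2.1 = -gB d (Z ((0:BSpace d),0,1)).1 y := by
      intro y; have := skewQB y; linarith
    have hh : ∀ y : BSpace d,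
        (Z (y,0,0)).2.2 = -(α * gB d (ξB d) y) := by
      intro y
      have h := skewPB y
      rw [hp, gB_smul_left] at h
      linarith
    refine ⟨{ toFun := fun x => (Z (x,0,0)).1
              map_add' := by
                intro x y
                have h : ((x + y : BSpace d),(0:ℝ),(0:ℝ))
                    = ((x,0,0) : ASpace d) + (y,0,0) := by
                  simp [Prod.ext_iff]
                show (Z ((x + y : BSpace d),0,0)).1 = (Z (x,0,0)).1 + (Z (y,0,0)).1
                rw [h, hlin.map_add]; rfl
              map_smul' := by
                intro c x
                have h : ((c • x : BSpace d),(0:ℝ),(0:ℝ))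
                    = c • ((x,0,0) : ASpace d) := by
                  simp [Prod.ext_iff]
                show (Z ((c • x : BSpace d),0,0)).1 = c • (Z (x,0,0)).1
                rw [h, hlin.map_smul]; rfl },
          (Z ((0:BSpace d),0,1)).1, α, χ, ?_, ?_, ?_⟩
    · intro u v
      exact skewAA u v
    · show (Z (ξB d, 0, 0)).1 + χ • ξB d = 0
      rw [hAxi, neg_smul, neg_add_cancel]
    · intro x a b
      rw [hdec x a b]
      refine aspace_ext ?_ ?_ ?_
      · show (Z (x,0,0)).1 + a • (Z ((0:BSpace d),1,0)).1
            + b • (Z ((0:BSpace d),0,1)).1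
          = (Z (x,0,0)).1 + (α * a) • ξB d + b • (Z ((0:BSpace d),0,1)).1
        rw [hp, smul_smul, mul_comm a α]
      · show (Z (x,0,0)).2.1 + a * (Z ((0:BSpace d),1,0)).2.1
            + b * (Z ((0:BSpace d),0,1)).2.1
          = -gB d (Z ((0:BSpace d),0,1)).1 x + χ * a
        rw [hf x, skewQQ, hχ]; ring
      · show (Z (x,0,0)).2.2 + a * (Z ((0:BSpace d),1,0)).2.2
            + b * (Z ((0:BSpace d),0,1)).2.2
          = -(α * gB d (ξB d) x) - χ * b
        rw [hh x, hc3, hc4]; ring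
  · rintro ⟨Λ, Γ, α, χ, hΛ, hχ, hZ⟩
    have hχ' : Λ (ξB d) = (-χ) • ξB d := by
      rw [neg_smul]
      exact eq_neg_of_add_eq_zero_left hχ
    have hξΛ : ∀ x : BSpace d, gB d (ξB d) (Λ x) = χ * gB d (ξB d) x := by
      intro x
      have h1 := hΛ (ξB d) x
      rw [hχ', gB_smul_left] at h1
      linarith
    refine ⟨⟨?_, ?_⟩, ?_, ?_⟩
    · rintro ⟨x,a,b⟩ ⟨y,c,e⟩
      show Z ((x + y : BSpace d), a + c, b + e) = Z (x,a,b) + Z (y,c,e)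
      rw [hZ, hZ, hZ]
      refine aspace_ext ?_ ?_ ?_
      · show Λ (x + y) + (α * (a + c)) • ξB d + (b + e) • Γ
          = (Λ x + (α * a) • ξB d + b • Γ) + (Λ y + (α * c) • ξB d + e • Γ)
        rw [map_add]
        module
      · show -gB d Γ (x + y) + χ * (a + c)
          = (-gB d Γ x + χ * a) + (-gB d Γ y + χ * c)
        rw [gB_add_right]; ring
      · show -(α * gB d (ξB d) (x + y)) - χ * (b + e)
          = (-(α * gB d (ξB d) x) - χ * b) + (-(α * gB d (ξB d) y) - χ * e)
        rw [gB_add_right]; ring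
    · rintro c ⟨x,a,b⟩
      show Z ((c • x : BSpace d), c * a, c * b) = c • Z (x,a,b)
      rw [hZ, hZ]
      refine aspace_ext ?_ ?_ ?_
      · show Λ (c • x) + (α * (c * a)) • ξB d + (c * b) • Γ
          = c • (Λ x + (α * a) • ξB d + b • Γ)
        rw [map_smul]
        module
      · show -gB d Γ (c • x) + χ * (c * a)
          = c * (-gB d Γ x + χ * a)
        rw [gB_smul_right]; ring
      · show -(α * gB d (ξB d) (c • x)) - χ * (c * b)
          = c * (-(α * gB d (ξB d) x) - χ * b)
        rw [gB_smul_right]; ring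
    · rintro ⟨x,a,b⟩ ⟨y,c,e⟩
      rw [hZ, hZ]
      simp only [GA]
      simp only [gB_add_left, gB_add_right, gB_smul_left, gB_smul_right]
      linear_combination hΛ x y + e * gB_symm d x Γ + (α * c) * gB_symm d x (ξB d)
    · rintro ⟨x,a,b⟩
      show Z ((b • ξB d : BSpace d), -gB d (ξB d) x, 0) = _
      rw [hZ, hZ]
      simp only [Z0]
      refine aspace_ext ?_ ?_ ?_
      · show Λ (b • ξB d) + (α * -gB d (ξB d) x) • ξB d + (0:ℝ) • Γ
          = (-(α * gB d (ξB d) x) - χ * b) • ξB d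
        rw [map_smul, hχ']
        module
      · show -gB d Γ (b • ξB d) + χ * -gB d (ξB d) x
          = -gB d (ξB d) (Λ x + (α * a) • ξB d + b • Γ)
        rw [gB_smul_right, gB_add_right, gB_add_right, gB_smul_right, gB_smul_right,
          hξΛ, gB_xi_xi, gB_symm d Γ (ξB d)]
        ring
      · show -(α * gB d (ξB d) (b • ξB d)) - χ * 0 = 0
        rw [gB_smul_right, gB_xi_xi]; ring
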